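/- arXiv:1309.7489 — 2 statements merged into one kernel-verified Lean document; each statement's English description precedes it below -/
import Mathlib

section
/- Let X be the inverse limit of an inverse sequence of compact metric spaces X_n with bonding maps ω_{n+1} : X_{n+1} → X_n, and let K be a CW-complex. Suppose for each n there is a representative collection 𝓕_n of partial maps from X_n to K such that every f ∈ 𝓕_n is extendable in the inverse system (i.e., there exists j > n such that the composition of the bonding map ω^n_j : X_j → X_n restricted to (ω^n_j)^{-1}(dom f) with f extends continuously over X_j). Then every continuous map from a closed subset of X to K extends continuously over X (i.e., edim X ≤ K). -/
universe u

/-- Composite bonding map `ω^i_{i+j} : X_{i+j} → X_i` of an inverse sequence. -/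
def bond {X : ℕ → Type u} (ω : ∀ n, X (n + 1) → X n) (i : ℕ) : ∀ j, X (i + j) → X i
  | 0 => id
  | j + 1 => fun x => bond ω i j (ω (i + j) x)

/-!
Extend `f` over an open neighbourhood `U` of `A` in `∏ X n` (`K` is an ANE). By compactness of
`A`, for large `r` every point of `∏ X n` that agrees with some `a ∈ A` up to level `r` lies in
`U`, so close to `a` that `f` is homotopic to `f' ∘ π_r` for a map `f'` on `π_r(A) ⊆ X r`.
A representative of `f'` extends over some `X (r + j)`, and composing with `π_{r+j}` gives
`G : L → K` with `G|_A ≃ f`. Borsuk's homotopy extension theorem for the ANE `K` then deforms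
`G` into an extension of `f`.
-/

open Set Filter Topology

def IsANE (K : Type u) [TopologicalSpace K] : Prop :=
  ∀ (Y : Type u) [MetricSpace Y] (A : Set Y), IsClosed A → ∀ f : C(A, K),
    ∃ (U : Set Y) (_ : IsOpen U) (hAU : A ⊆ U) (g : C(U, K)),
      ∀ (a : Y) (ha : a ∈ A), g ⟨a, hAU ha⟩ = f ⟨a, ha⟩

theorem isOpen_setOf_forall_prodMk_mem {X Y : Type*} [TopologicalSpace X] [TopologicalSpace Y]
    [CompactSpace Y] {U : Set (X × Y)} (hU : IsOpen U) : IsOpen {x | ∀ y, (x, y) ∈ U} := by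
  have : {x | ∀ y, (x, y) ∈ U} = (Prod.fst '' Uᶜ)ᶜ := by
    ext x
    simp
  rw [this]
  exact (isClosedMap_fst_of_compactSpace _ hU.isClosed_compl).isOpen_compl

namespace IsANE

theorem exists_extension_of_isClosedEmbedding {K : Type u} [TopologicalSpace K] (hK : IsANE K)
    {Y : Type u} {Z : Type*} [MetricSpace Y] [TopologicalSpace Z] {e : Z → Y}
    (he : IsClosedEmbedding e) (f : C(Z, K)) :
    ∃ U : Set Y, IsOpen U ∧ ∃ hU : range e ⊆ U, ∃ g : C(U, K),
      ∀ z, g ⟨e z, hU (mem_range_self z)⟩ = f z := by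
  obtain ⟨U, hU, heU, g, hg⟩ := hK Y (range e) he.isClosed_range
    (f.comp ⟨he.isEmbedding.toHomeomorph.symm, he.isEmbedding.toHomeomorph.symm.continuous⟩)
  exact ⟨U, hU, heU, g, fun z => by simpa using hg (e z) (mem_range_self z)⟩

theorem exists_diagonal_nhds_homotopic {K : Type u} [MetricSpace K] (hK : IsANE K) :
    ∃ V : Set (K × K), IsOpen V ∧ (∀ k, (k, k) ∈ V) ∧
      ∀ {Z : Type*} [TopologicalSpace Z] (φ ψ : C(Z, K)), (∀ z, (φ z, ψ z) ∈ V) →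
        φ.Homotopic ψ := by
  classical
  -- `V` is the tube around `K × K` in a neighbourhood of `Δ × I ∪ K × K × {0, 1}` over which
  -- the map `(k₁, k₂, t) ↦ if t = 1 then k₂ else k₁` extends.
  let D₀ : Set ((K × K) × unitInterval) := {q | q.1.1 = q.1.2 ∨ q.2 = 0}
  let D₁ : Set ((K × K) × unitInterval) := {q | q.2 = 1}
  have hD₀ : IsClosed D₀ := (isClosed_eq (by fun_prop) (by fun_prop)).union
    (isClosed_eq (by fun_prop) (by fun_prop))
  have hD₁ : IsClosed D₁ := isClosed_eq (by fun_prop) (by fun_prop)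
  let F : (K × K) × unitInterval → K := fun q => if q.2 = 1 then q.1.2 else q.1.1
  have hF : ContinuousOn F (D₀ ∪ D₁) := by
    refine ContinuousOn.union_of_isClosed ?_ ?_ hD₀ hD₁
    · refine (continuous_fst.fst.continuousOn).congr fun q hq => ?_
      by_cases h1 : q.2 = 1
      · have : q.1.1 = q.1.2 := hq.resolve_right (h1 ▸ one_ne_zero)
        simp [F, h1, this]
      · simp [F, h1]
    · exact (continuous_fst.snd.continuousOn).congr fun q (hq : q.2 = 1) => by simp [F, hq]
  obtain ⟨U, hU, hDU, G, hG⟩ := hK _ _ (hD₀.union hD₁) ⟨_, hF.domRestrict⟩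
  refine ⟨{c | ∀ t, (c, t) ∈ U}, isOpen_setOf_forall_prodMk_mem hU,
    fun k t => hDU (Or.inl (Or.inl rfl)), fun φ ψ hV => ⟨?_⟩⟩
  refine ⟨⟨fun q => G ⟨((φ q.2, ψ q.2), q.1), hV q.2 q.1⟩, by fun_prop⟩,
    fun z => ?_, fun z => ?_⟩
  · simpa [F] using hG ((φ z, ψ z), 0) (Or.inl (Or.inr rfl))
  · simpa [F] using hG ((φ z, ψ z), 1) (Or.inr rfl)


theorem exists_extension_of_homotopic {L K : Type u} [MetricSpace L] [TopologicalSpace K]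
    (hK : IsANE K) {A : Set L} (hA : IsClosed A) {f : C(A, K)} {G : C(L, K)}
    (hGf : (G.restrict A).Homotopic f) : ∃ g : C(L, K), g.restrict A = f := by
  classical
  obtain ⟨H⟩ := hGf
  let B₀ : Set (L × unitInterval) := Prod.fst ⁻¹' A
  let B₁ : Set (L × unitInterval) := Prod.snd ⁻¹' {0}
  have hB₀ : IsClosed B₀ := hA.preimage continuous_fst
  have hB₁ : IsClosed B₁ := isClosed_singleton.preimage continuous_snd
  let F : L × unitInterval → K := fun q => if h : q.1 ∈ A then H (q.2, ⟨q.1, h⟩) else G q.1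
  have hF : ContinuousOn F (B₀ ∪ B₁) := by
    refine ContinuousOn.union_of_isClosed ?_ ?_ hB₀ hB₁
    · rw [continuousOn_iff_continuous_domRestrict]
      have : B₀.domRestrict F = fun q => H (q.1.2, ⟨q.1.1, q.2⟩) :=
        funext fun q => dif_pos q.2
      rw [this]
      fun_prop
    · refine (G.continuous.comp continuous_fst).continuousOn.congr fun q (hq : q.2 = 0) => ?_
      by_cases h : q.1 ∈ A
      · simp [F, h, hq]
      · simp [F, h]
  obtain ⟨U, hU, hBU, E, hE⟩ := hK _ _ (hB₀.union hB₁) ⟨_, hF.domRestrict⟩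
  let W : Set L := {x | ∀ t, (x, t) ∈ U}
  have hAW : A ⊆ W := fun a ha t => hBU (Or.inl ha)
  -- Pull the extended homotopy back along `x ↦ (x, u x)`, where `u` is `1` on `A` and `0` off
  -- the tube `W`.
  obtain ⟨u, hu0, hu1, hu01⟩ := exists_continuous_zero_one_of_isClosed
    (isOpen_setOf_forall_prodMk_mem hU).isClosed_compl hA
    (disjoint_compl_left_iff_subset.mpr hAW)
  have hmem : ∀ x, (x, (⟨u x, hu01 x⟩ : unitInterval)) ∈ U := fun x => by
    by_cases hx : x ∈ W
    · exact hx _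
    · have : (⟨u x, hu01 x⟩ : unitInterval) = 0 := Subtype.ext (hu0 hx)
      exact this ▸ hBU (Or.inr rfl)
  refine ⟨⟨fun x => E ⟨(x, ⟨u x, hu01 x⟩), hmem x⟩, by fun_prop⟩, ?_⟩
  ext a
  have : (⟨u a, hu01 a⟩ : unitInterval) = 1 := Subtype.ext (hu1 a.2)
  simpa [this, F] using hE (a.1, 1) (Or.inl a.2)

end IsANE

theorem eventually_forall_mem_of_eqOn_Iic {X : ℕ → Type*} [∀ n, TopologicalSpace (X n)]
    {S : Set (∀ n, X n)} (hS : IsCompact S) {O : Set ((∀ n, X n) × (∀ n, X n))}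
    (hO : ∀ z ∈ S, O ∈ 𝓝 (z, z)) :
    ∀ᶠ r in atTop, ∀ z ∈ S, ∀ w : ∀ n, X n, (∀ i ≤ r, w i = z i) → (z, w) ∈ O := by
  refine hS.induction_on (by simp) (fun s t hst h => h.mono fun r hr z hz => hr z (hst hz))
    (fun s t hs ht => (hs.and ht).mono fun r hr z hz => hz.elim (hr.1 z) (hr.2 z)) ?_
  intro z hz
  obtain ⟨N, hN, hNO⟩ := mem_prod_self_iff.mp
    (by simpa only [nhds_prod_eq] using hO z hz : O ∈ 𝓝 z ×ˢ 𝓝 z)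
  rw [nhds_pi] at hN
  obtain ⟨I, t, ht, hIN⟩ := mem_pi'.mp hN
  refine ⟨(I : Set ℕ).pi t, mem_nhdsWithin_of_mem_nhds (set_pi_mem_nhds I.finite_toSet
    fun i _ => ht i), (eventually_ge_atTop (I.sup id)).mono fun r hr z' hz' w hw => ?_⟩
  refine hNO ⟨hIN hz', hIN fun i hi => ?_⟩
  change w i ∈ t i
  rw [hw i ((Finset.le_sup (f := id) hi).trans hr)]
  exact hz' i hi

section InverseLimit

variable {X : ℕ → Type u} (ω : ∀ n, X (n + 1) → X n)

def invLimit : Set (∀ n, X n) := {x | ∀ n, ω n (x (n + 1)) = x n}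

variable {ω}

theorem bond_apply_of_mem_invLimit {x : ∀ n, X n} (hx : x ∈ invLimit ω) (i : ℕ) :
    ∀ j, bond ω i j (x (i + j)) = x i
  | 0 => rfl
  | j + 1 => by
    change bond ω i j (ω (i + j) (x (i + j + 1))) = x i
    rw [hx (i + j)]
    exact bond_apply_of_mem_invLimit hx i j

variable (ω) in
/-- The thread through `y : X r` below level `r`, padded by `x₀` above it. -/
def threadOf (x₀ : ∀ n, X n) : ∀ r, X r → ∀ n, X n
  | 0, y => Function.update x₀ 0 y
  | r + 1, y => Function.update (threadOf x₀ r (ω r y)) (r + 1) y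

theorem threadOf_apply_of_mem_invLimit (x₀ : ∀ n, X n) {x : ∀ n, X n}
    (hx : x ∈ invLimit ω) :
    ∀ {r i : ℕ}, i ≤ r → threadOf ω x₀ r (x r) i = x i
  | 0, 0, _ => by simp [threadOf]
  | r + 1, i, hi => by
    rcases (Nat.le_succ_iff.mp hi) with hi | rfl
    · rw [threadOf, Function.update_of_ne (by omega), hx r,
        threadOf_apply_of_mem_invLimit x₀ hx hi]
    · simp [threadOf]

variable [∀ n, TopologicalSpace (X n)]

theorem continuous_threadOf (hω : ∀ n, Continuous (ω n)) (x₀ : ∀ n, X n) :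
    ∀ r, Continuous (threadOf ω x₀ r)
  | 0 => continuous_const.update 0 continuous_id
  | r + 1 => ((continuous_threadOf hω x₀ r).comp (hω r)).update (r + 1) continuous_id

theorem isClosed_invLimit [∀ n, T2Space (X n)] (hω : ∀ n, Continuous (ω n)) :
    IsClosed (invLimit ω) := by
  simp only [invLimit, ofPred_forall]
  exact isClosed_iInter fun n => isClosed_eq (by fun_prop) (by fun_prop)

variable (ω) in
def levelProj (r : ℕ) : C(invLimit ω, X r) :=
  ⟨fun x => x.1 r, (continuous_apply r).comp continuous_subtype_val⟩

variable (ω) in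
def levelMap (r : ℕ) (A : Set (invLimit ω)) (F : Set (X r)) (h : MapsTo (levelProj ω r) A F) :
    C(A, F) :=
  ⟨h.restrict _ _ _, (levelProj ω r).continuous.restrict h⟩

theorem restrict_comp_eq_comp_levelMap {K : Type*} [TopologicalSpace K] {r j : ℕ}
    {F : Set (X r)} {φ : C(F, K)} {g : C(X (r + j), K)}
    (hg : ∀ (x : X (r + j)) (hx : bond ω r j x ∈ F), g x = φ ⟨bond ω r j x, hx⟩)
    {A : Set (invLimit ω)} (hAF : MapsTo (levelProj ω r) A F) :
    (g.comp (levelProj ω (r + j))).restrict A = φ.comp (levelMap ω r A F hAF) := by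
  ext a
  have hb := bond_apply_of_mem_invLimit a.1.2 r j
  simp only [ContinuousMap.restrict_apply, ContinuousMap.comp_apply]
  rw [hg _ (hb ▸ hAF a.2)]
  congr 1
  exact Subtype.ext hb

end InverseLimit

theorem IsANE.exists_homotopic_comp_levelMap {X : ℕ → Type u} [∀ n, MetricSpace (X n)]
    {ω : ∀ n, X (n + 1) → X n} (hω : ∀ n, Continuous (ω n)) {K : Type u} [MetricSpace K]
    (hK : IsANE K) (x₀ : ∀ n, X n) {A : Set (invLimit ω)} (hA : IsCompact A) (f : C(A, K)) :
    ∃ r, ∃ f' : C(levelProj ω r '' A, K),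
      f.Homotopic (f'.comp (levelMap ω r A _ (mapsTo_image _ A))) := by
  let _ : MetricSpace (∀ n, X n) := PiCountable.metricSpace
  have : CompactSpace A := isCompact_iff_compactSpace.mp hA
  have he : IsClosedEmbedding fun a : A => a.1.1 :=
    (continuous_subtype_val.comp continuous_subtype_val).isClosedEmbedding
      (Subtype.val_injective.comp Subtype.val_injective)
  obtain ⟨U, hU, hAU, H, hH⟩ := hK.exists_extension_of_isClosedEmbedding he f
  obtain ⟨V, hV, hVdiag, hVhom⟩ := hK.exists_diagonal_nhds_homotopic
  let O : Set ((∀ n, X n) × (∀ n, X n)) :=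
    Prod.map Subtype.val Subtype.val '' ((fun q : U × U => (H q.1, H q.2)) ⁻¹' V)
  have hO : IsOpen O :=
    (hU.isOpenEmbedding_subtypeVal.prodMap hU.isOpenEmbedding_subtypeVal).isOpenMap _
      (hV.preimage (by fun_prop))
  have hOdiag : ∀ z ∈ range fun a : A => a.1.1, O ∈ 𝓝 (z, z) := by
    rintro _ ⟨a, rfl⟩
    have ha : a.1.1 ∈ U := hAU (mem_range_self a)
    exact hO.mem_nhds ⟨(⟨_, ha⟩, ⟨_, ha⟩), hVdiag _, rfl⟩
  obtain ⟨r, hr⟩ :=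
    (eventually_forall_mem_of_eqOn_Iic (isCompact_range he.continuous) hOdiag).exists
  have hthread : ∀ a : A,
      ∃ hU' : threadOf ω x₀ r (a.1.1 r) ∈ U, (f a, H ⟨_, hU'⟩) ∈ V := by
    intro a
    obtain ⟨⟨⟨z, hz⟩, ⟨w, hw⟩⟩, hzw, hzw_eq⟩ := hr _ (mem_range_self a) _
      fun i hi => threadOf_apply_of_mem_invLimit x₀ a.1.2 hi
    obtain ⟨rfl, rfl⟩ := Prod.mk.inj hzw_eq
    exact ⟨hw, hH a ▸ hzw⟩
  have hthreadU : ∀ y ∈ levelProj ω r '' A, threadOf ω x₀ r y ∈ U := by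
    rintro _ ⟨a, ha, rfl⟩
    exact (hthread ⟨a, ha⟩).1
  have := continuous_threadOf hω x₀ r
  refine ⟨r, ⟨fun y => H ⟨_, hthreadU y.1 y.2⟩, by fun_prop⟩, hVhom _ _ fun a => ?_⟩
  exact (hthread a).2

/-- Let `X` be the inverse limit of an inverse sequence of compact metric spaces `X n`
with continuous bonding maps `ω n : X (n+1) → X n`, and let `K` be an ANE (e.g. a
CW-complex). If for each `n` there is a representative collection `𝓕 n` of partial maps
from `X n` to `K` each member of which is extendable in the inverse system, then every
continuous map from a closed subset of the limit to `K` extends over the limit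
(i.e. `edim X ≤ K`). -/
theorem stmt_5 (X : ℕ → Type u) [∀ n, MetricSpace (X n)] [∀ n, CompactSpace (X n)]
    (ω : ∀ n, X (n + 1) → X n) (hω : ∀ n, Continuous (ω n))
    (K : Type u) [MetricSpace K]
    (hANE : ∀ (Y : Type u) [MetricSpace Y] (A : Set Y), IsClosed A → ∀ f : C(A, K),
      ∃ (U : Set Y) (_ : IsOpen U) (hAU : A ⊆ U) (g : C(U, K)),
        ∀ (a : Y) (ha : a ∈ A), g ⟨a, hAU ha⟩ = f ⟨a, ha⟩)
    (𝓕 : ∀ n, Set ((F : {F : Set (X n) // IsClosed F}) × C(F.1, K)))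
    (hrep : ∀ n (F' : Set (X n)), IsClosed F' → ∀ f' : C(F', K),
      ∃ p ∈ 𝓕 n, ∃ hsub : F' ⊆ p.1.1,
        (p.2.comp ⟨Set.inclusion hsub, continuous_inclusion hsub⟩).Homotopic f')
    (hext : ∀ n, ∀ p ∈ 𝓕 n, ∃ j : ℕ, 0 < j ∧
      ∃ g : C(X (n + j), K), ∀ (x : X (n + j)) (hx : bond ω n j x ∈ p.1.1),
        g x = p.2 ⟨bond ω n j x, hx⟩)
    (L : Set (∀ n, X n)) (hL : ∀ x, x ∈ L ↔ ∀ n, ω n (x (n + 1)) = x n) :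
    ∀ (A : Set L), IsClosed A → ∀ f : C(A, K),
      ∃ g : C(L, K), ∀ (a : L) (ha : a ∈ A), g a = f ⟨a, ha⟩ := by
  intro A hA f
  obtain rfl : L = invLimit ω := Set.ext hL
  have hK : IsANE K := hANE
  rcases isEmpty_or_nonempty (invLimit ω) with hempty | ⟨⟨x₀, -⟩⟩
  · exact ⟨⟨isEmptyElim, continuous_of_discreteTopology⟩, fun a => isEmptyElim a⟩
  let _ : MetricSpace (∀ n, X n) := PiCountable.metricSpace
  have : CompactSpace (invLimit ω) :=
    isCompact_iff_compactSpace.mp (isClosed_invLimit hω).isCompact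
  have hAc : IsCompact A := hA.isCompact
  obtain ⟨r, f', hf'⟩ := hK.exists_homotopic_comp_levelMap hω x₀ hAc f
  obtain ⟨p, hp, hsub, hpf'⟩ := hrep r _ (hAc.image (levelProj ω r).continuous).isClosed f'
  obtain ⟨j, -, g, hg⟩ := hext r p hp
  have hGf : ((g.comp (levelProj ω (r + j))).restrict A).Homotopic f := by
    rw [restrict_comp_eq_comp_levelMap hg ((mapsTo_image _ A).mono_right hsub)]
    exact (hpf'.comp (.refl _)).trans hf'.symm
  obtain ⟨G, hG⟩ := hK.exists_extension_of_homotopic hA hGf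
  exact ⟨G, fun a ha => DFunLike.congr_fun hG ⟨a, ha⟩⟩
end

section
/- Let {γ_i : Y_i → X}_{i ∈ I} be a countable family of continuous surjections of compact metric spaces, and let Z ⊆ ∏_i Y_i be their pull-back, i.e., Z = { y ∈ ∏ Y_i : γ_p(y_p) = γ_q(y_q) for all p, q }. Suppose each γ_i is the orbit map of a continuous action of a compact group Γ_i on Y_i with X = Y_i/Γ_i. Then the product group Γ = ∏_i Γ_i acts continuously on Z coordinatewise, Z is a nonempty compact space, this action has orbit space Z/Γ homeomorphic to X, and the natural projection Z → X is the orbit map. -/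
/-!
Choosing a preimage of a point `x : X` in every `Y i` gives a point of the pull-back `Z` over `x`,
so `Z` is nonempty and the projection `Z → X` is onto. `Z` is cut out of the compact product by
closed conditions, hence compact, and a continuous surjection from a compact space onto a Hausdorff
space is a quotient map. Two points of `Z` with the same image lie over the same point in every
coordinate, so they are related coordinatewise by the actions of the `Γ i`.
-/

open Topology

section

variable {I X : Type*} {Y : I → Type*}

def fiberProduct (f : ∀ i, Y i → X) : Set (∀ i, Y i) :=
  {y | ∀ p q, f p (y p) = f q (y q)}

namespace fiberProduct

variable {f : ∀ i, Y i → X}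

theorem exists_mem_forall_apply_eq (hf : ∀ i, Function.Surjective (f i)) (x : X) :
    ∃ y ∈ fiberProduct f, ∀ i, f i (y i) = x := by
  choose y hy using fun i => hf i x
  exact ⟨y, fun p q => by rw [hy p, hy q], hy⟩

theorem nonempty [Nonempty X] (hf : ∀ i, Function.Surjective (f i)) :
    (fiberProduct f).Nonempty :=
  let ⟨y, hy, _⟩ := exists_mem_forall_apply_eq hf (Classical.arbitrary X)
  ⟨y, hy⟩

theorem surjective_proj (hf : ∀ i, Function.Surjective (f i)) (i₀ : I) :
    Function.Surjective fun z : fiberProduct f => f i₀ ((z : ∀ i, Y i) i₀) := fun x =>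
  let ⟨y, hy, hyx⟩ := exists_mem_forall_apply_eq hf x
  ⟨⟨y, hy⟩, hyx i₀⟩

section Topology

variable [TopologicalSpace X] [∀ i, TopologicalSpace (Y i)]

theorem isClosed [T2Space X] (hf : ∀ i, Continuous (f i)) : IsClosed (fiberProduct f) := by
  simp only [fiberProduct, Set.ofPred_forall]
  exact isClosed_iInter fun p => isClosed_iInter fun q =>
    isClosed_eq ((hf p).comp (continuous_apply p)) ((hf q).comp (continuous_apply q))

theorem isCompact [T2Space X] [∀ i, CompactSpace (Y i)] (hf : ∀ i, Continuous (f i)) :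
    IsCompact (fiberProduct f) :=
  (isClosed hf).isCompact

theorem isQuotientMap_proj [T2Space X] [∀ i, CompactSpace (Y i)] (hf : ∀ i, Continuous (f i))
    (hf' : ∀ i, Function.Surjective (f i)) (i₀ : I) :
    IsQuotientMap fun z : fiberProduct f => f i₀ ((z : ∀ i, Y i) i₀) :=
  have : CompactSpace (fiberProduct f) := isCompact_iff_compactSpace.1 (isCompact hf)
  .of_surjective_continuous (surjective_proj hf' i₀)
    ((hf i₀).comp ((continuous_apply i₀).comp continuous_subtype_val))

end Topology

section Action

variable {G : I → Type*} [∀ i, SMul (G i) (Y i)]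

theorem smul_mem (hinv : ∀ (i) (g : G i) (y : Y i), f i (g • y) = f i y) (g : ∀ i, G i)
    {y : ∀ i, Y i} (hy : y ∈ fiberProduct f) : g • y ∈ fiberProduct f := fun p q => by
  simpa only [Pi.smul_apply', hinv] using hy p q

theorem proj_eq_iff_exists_smul (hinv : ∀ (i) (g : G i) (y : Y i), f i (g • y) = f i y)
    (horb : ∀ (i) (y y' : Y i), f i y = f i y' → ∃ g : G i, g • y = y') (i₀ : I)
    {y y' : ∀ i, Y i} (hy : y ∈ fiberProduct f) (hy' : y' ∈ fiberProduct f) :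
    f i₀ (y i₀) = f i₀ (y' i₀) ↔ ∃ g : ∀ i, G i, ∀ i, g i • y i = y' i := by
  constructor
  · intro h
    have hcoord : ∀ i, f i (y i) = f i (y' i) := fun i => by rw [hy i i₀, hy' i i₀, h]
    choose g hg using fun i => horb i _ _ (hcoord i)
    exact ⟨g, hg⟩
  · rintro ⟨g, hg⟩
    rw [← hg i₀, hinv]

end Action

end fiberProduct

end

theorem stmt_15_general (I : Type*) (i₀ : I)
    (X : Type*) [MetricSpace X] [Nonempty X]
    (Y : I → Type*) [∀ i, MetricSpace (Y i)] [∀ i, CompactSpace (Y i)]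
    (Γ : I → Type*) [∀ i, Group (Γ i)] [∀ i, TopologicalSpace (Γ i)]
    [∀ i, MulAction (Γ i) (Y i)] [∀ i, ContinuousSMul (Γ i) (Y i)]
    (γ : ∀ i, C(Y i, X)) (hsurj : ∀ i, Function.Surjective (γ i))
    (hinv : ∀ (i) (g : Γ i) (y : Y i), γ i (g • y) = γ i y)
    (horb : ∀ (i) (y y' : Y i), γ i y = γ i y' → ∃ g : Γ i, g • y = y')
    (Z : Set (∀ i, Y i)) (hZ : ∀ y, y ∈ Z ↔ ∀ p q, γ p (y p) = γ q (y q)) :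
    Z.Nonempty ∧ IsCompact Z ∧
    (∀ (g : ∀ i, Γ i) (y : ∀ i, Y i), y ∈ Z → (fun i => g i • y i) ∈ Z) ∧
    Continuous (fun p : (∀ i, Γ i) × (∀ i, Y i) => fun i => p.1 i • p.2 i) ∧
    Topology.IsQuotientMap (fun z : ↥Z => γ i₀ ((z : ∀ i, Y i) i₀)) ∧
    (∀ z z' : ↥Z, γ i₀ ((z : ∀ i, Y i) i₀) = γ i₀ ((z' : ∀ i, Y i) i₀) ↔
      ∃ g : ∀ i, Γ i, ∀ i, g i • (z : ∀ i, Y i) i = (z' : ∀ i, Y i) i) := by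
  obtain rfl : Z = fiberProduct fun i => γ i := Set.ext hZ
  have hcont : ∀ i, Continuous (γ i) := fun i => (γ i).continuous
  exact ⟨fiberProduct.nonempty hsurj, fiberProduct.isCompact hcont,
    fun g _ => fiberProduct.smul_mem hinv g, continuous_smul,
    fiberProduct.isQuotientMap_proj hcont hsurj i₀,
    fun z z' => fiberProduct.proj_eq_iff_exists_smul hinv horb i₀ z.2 z'.2⟩

/-- Let `γ i : Y i → X` be a countable family of orbit maps of continuous actions of
compact groups `Γ i` on compact metric spaces `Y i` with `X = Y i / Γ i`, and let
`Z ⊆ ∏ Y i` be their pull-back. Then the product group `Γ = ∏ Γ i` acts continuously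
on `Z` coordinatewise, `Z` is a nonempty compact space, the natural projection
`Z → X` is a quotient map whose fibers are exactly the `Γ`-orbits; i.e. `Z/Γ ≅ X`
with the projection as orbit map. -/
theorem stmt_15 (I : Type*) [Countable I] [Nonempty I] (i₀ : I)
    (X : Type*) [MetricSpace X] [CompactSpace X] [Nonempty X]
    (Y : I → Type*) [∀ i, MetricSpace (Y i)] [∀ i, CompactSpace (Y i)]
    (Γ : I → Type*) [∀ i, Group (Γ i)] [∀ i, TopologicalSpace (Γ i)]
    [∀ i, IsTopologicalGroup (Γ i)] [∀ i, CompactSpace (Γ i)]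
    [∀ i, MulAction (Γ i) (Y i)] [∀ i, ContinuousSMul (Γ i) (Y i)]
    (γ : ∀ i, C(Y i, X)) (hsurj : ∀ i, Function.Surjective (γ i))
    (hinv : ∀ (i) (g : Γ i) (y : Y i), γ i (g • y) = γ i y)
    (horb : ∀ (i) (y y' : Y i), γ i y = γ i y' → ∃ g : Γ i, g • y = y')
    (Z : Set (∀ i, Y i)) (hZ : ∀ y, y ∈ Z ↔ ∀ p q, γ p (y p) = γ q (y q)) :
    Z.Nonempty ∧ IsCompact Z ∧
    (∀ (g : ∀ i, Γ i) (y : ∀ i, Y i), y ∈ Z → (fun i => g i • y i) ∈ Z) ∧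
    Continuous (fun p : (∀ i, Γ i) × (∀ i, Y i) => fun i => p.1 i • p.2 i) ∧
    Topology.IsQuotientMap (fun z : ↥Z => γ i₀ ((z : ∀ i, Y i) i₀)) ∧
    (∀ z z' : ↥Z, γ i₀ ((z : ∀ i, Y i) i₀) = γ i₀ ((z' : ∀ i, Y i) i₀) ↔
      ∃ g : ∀ i, Γ i, ∀ i, g i • (z : ∀ i, Y i) i = (z' : ∀ i, Y i) i) :=
  stmt_15_general I i₀ X Y Γ γ hsurj hinv horb Z hZ
end
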